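/- arXiv:0807.2350 — 3 statements merged into one kernel-verified Lean document; each statement's English description precedes it below -/
import Mathlib

section
/- For every τ in the upper half-plane ℍ with |q_τ| ≤ 0.005 one has |(2πi)¹²·q_τ/Δ(τ) − 1 − 24·q_τ| ≤ 342·|q_τ|². -/
open scoped Real

/-- `q_τ = e^{2πiτ}`. -/
noncomputable def qPar (τ : ℂ) : ℂ := Complex.exp (2 * Real.pi * Complex.I * τ)

/-- `c₂(τ) = ((2πi)⁴/12)·(1 + 240·Σ_{n≥1} n³ qⁿ/(1-qⁿ))`. -/
noncomputable def c₂fun (τ : ℂ) : ℂ :=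
  (2 * Real.pi * Complex.I) ^ 4 / 12 *
    (1 + 240 * ∑' n : ℕ, ((n : ℂ) + 1) ^ 3 * qPar τ ^ (n + 1) / (1 - qPar τ ^ (n + 1)))

/-- `Δ(τ) = (2πi)¹²·q·∏_{n≥1}(1-qⁿ)²⁴`. -/
noncomputable def Δfun (τ : ℂ) : ℂ :=
  (2 * Real.pi * Complex.I) ^ 12 * qPar τ * ∏' n : ℕ, (1 - qPar τ ^ (n + 1)) ^ 24

/-- The modular invariant `j(τ) = (12 c₂(τ))³/Δ(τ)`. -/
noncomputable def jfun (τ : ℂ) : ℂ := (12 * c₂fun τ) ^ 3 / Δfun τ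


/-! The product formula gives `(2πi)¹² q / Δ = exp (-24 ∑_{n ≥ 1} log (1 - qⁿ))`. Splitting off `n = 1`
leaves `(1 - q)⁻²⁴ · exp (-24 T)` with `T = ∑_{n ≥ 2} log (1 - qⁿ)` and `‖T‖ ≤ ‖q‖² / (1 - ‖q‖)²`.
Past the second term, consecutive coefficients of the binomial series
`(1 - q)⁻²⁴ = ∑ (n + 23 choose 23) qⁿ` grow by a factor at most `26/3`, so its tail beyond `1 + 24 q` is
at most `300 ‖q‖² / (1 - 26 ‖q‖ / 3) ≤ 313.6 ‖q‖²`, while `‖exp (-24 T) - 1‖ ≤ 24.27 ‖q‖²`.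
Together: `313.6 + 1.128 · 24.27 < 342`. -/

open Complex

namespace Complex

lemma norm_log_one_sub_le {z : ℂ} (hz : ‖z‖ < 1) : ‖log (1 - z)‖ ≤ ‖z‖ / (1 - ‖z‖) := by
  have h := norm_log_one_add_le (z := -z) (by rwa [norm_neg])
  rw [← sub_eq_add_neg, norm_neg] at h
  have hpos : 0 < 1 - ‖z‖ := by linarith
  refine h.trans (le_of_sub_nonneg ?_)
  rw [show ‖z‖ / (1 - ‖z‖) - (‖z‖ ^ 2 * (1 - ‖z‖)⁻¹ / 2 + ‖z‖) = ‖z‖ ^ 2 / 2 / (1 - ‖z‖) by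
    field_simp; ring]
  positivity

lemma norm_exp_sub_one_le_add_sq {z : ℂ} (hz : ‖z‖ ≤ 1) : ‖exp z - 1‖ ≤ ‖z‖ + ‖z‖ ^ 2 :=
  calc ‖exp z - 1‖ = ‖(exp z - 1 - z) + z‖ := by rw [sub_add_cancel]
    _ ≤ ‖exp z - 1 - z‖ + ‖z‖ := norm_add_le _ _
    _ ≤ ‖z‖ ^ 2 + ‖z‖ := by gcongr; exact norm_exp_sub_one_sub_id_le hz
    _ = ‖z‖ + ‖z‖ ^ 2 := add_comm _ _

end Complex

section NormedRing

variable {R : Type*} [NormedRing R]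

lemma norm_pow_succ_lt_one {z : R} (hz : ‖z‖ < 1) (n : ℕ) : ‖z ^ (n + 1)‖ < 1 :=
  (norm_pow_le' z n.succ_pos).trans_lt (pow_lt_one₀ (norm_nonneg z) hz n.succ_ne_zero)

variable [NormOneClass R]

lemma one_sub_ne_zero_of_norm_lt_one {z : R} (hz : ‖z‖ < 1) : 1 - z ≠ 0 :=
  sub_ne_zero.2 (ne_of_apply_ne norm (by rw [norm_one]; exact hz.ne'))

lemma norm_mul_one_add_sub_le (a b e : R) :
    ‖(1 + a + b) * (1 + e) - 1 - a‖ ≤ ‖b‖ + (1 + ‖a‖ + ‖b‖) * ‖e‖ :=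
  calc ‖(1 + a + b) * (1 + e) - 1 - a‖ = ‖b + (1 + a + b) * e‖ := by
        rw [mul_one_add]; congr 1; abel
    _ ≤ ‖b‖ + ‖1 + a + b‖ * ‖e‖ := (norm_add_le _ _).trans (by gcongr; exact norm_mul_le _ _)
    _ ≤ ‖b‖ + (1 + ‖a‖ + ‖b‖) * ‖e‖ := by
        gcongr
        exact (norm_add₃_le).trans_eq (by rw [norm_one])

end NormedRing

lemma Nat.cast_choose_add_two_le_mul_pow (n k : ℕ) :
    ((n + k + 2).choose k : ℝ) ≤ (k + 2).choose k * ((k + 3) / 3 : ℝ) ^ n := by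
  induction n with
  | zero => simp
  | succ n ih =>
    have hrec : ((n + 1 + k + 2).choose k : ℝ) * (n + 3) = (n + k + 2).choose k * (n + k + 3) := by
      have h := Nat.choose_mul_succ_eq (n + k + 2) k
      rw [show n + k + 2 + 1 - k = n + 3 by omega] at h
      rw [show n + 1 + k + 2 = n + k + 2 + 1 by ring]
      exact_mod_cast h.symm
    have hratio : (n + k + 3 : ℝ) ≤ (k + 3) / 3 * (n + 3) := by
      nlinarith [(n.cast_nonneg : (0 : ℝ) ≤ n), (k.cast_nonneg : (0 : ℝ) ≤ k)]
    have hpos : (0 : ℝ) < n + 3 := by positivity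
    rw [← mul_le_mul_iff_of_pos_right hpos, hrec, pow_succ]
    calc ((n + k + 2).choose k : ℝ) * (n + k + 3)
        ≤ (k + 2).choose k * ((k + 3) / 3 : ℝ) ^ n * ((k + 3) / 3 * (n + 3)) := by gcongr
      _ = _ := by ring

section qSeries

variable {q : ℂ}

lemma norm_inv_one_sub_pow_sub_le (k : ℕ) (hq : (k + 3) / 3 * ‖q‖ < 1) :
    ‖((1 - q) ^ (k + 1))⁻¹ - 1 - (k + 1) * q‖ ≤
      (k + 2).choose k * ‖q‖ ^ 2 / (1 - (k + 3) / 3 * ‖q‖) := by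
  set x := ‖q‖
  set r : ℝ := (k + 3) / 3 * x
  have hq1 : x < 1 := by
    refine lt_of_le_of_lt (le_mul_of_one_le_left (norm_nonneg q) ?_) hq
    rw [le_div_iff₀ (by norm_num)]; linarith [(k.cast_nonneg : (0 : ℝ) ≤ k)]
  have hseries := hasSum_choose_mul_geometric_of_norm_lt_one k hq1
  have htail := (hasSum_nat_add_iff' 2).2 hseries
  have hhead : ∑ i ∈ Finset.range 2, ((i + k).choose k : ℂ) * q ^ i = 1 + (k + 1) * q := by
    rw [Finset.sum_range_succ, Finset.sum_range_one, zero_add, Nat.choose_self, add_comm 1 k,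
      Nat.choose_succ_self_right]
    push_cast; ring
  have hgeom : HasSum (fun n : ℕ => (k + 2).choose k * x ^ 2 * r ^ n)
      ((k + 2).choose k * x ^ 2 / (1 - r)) := by
    rw [div_eq_mul_inv]
    exact (hasSum_geometric_of_lt_one (by positivity) hq).mul_left _
  rw [show ((1 - q) ^ (k + 1))⁻¹ - 1 - (k + 1) * q = 1 / (1 - q) ^ (k + 1) - (1 + (k + 1) * q) by
    ring, ← hhead, ← htail.tsum_eq]
  refine tsum_of_norm_bounded hgeom fun n => ?_
  calc ‖((n + 2 + k).choose k : ℂ) * q ^ (n + 2)‖ = ((n + k + 2).choose k : ℝ) * x ^ (n + 2) := by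
        rw [norm_mul, norm_pow, Complex.norm_natCast, show n + 2 + k = n + k + 2 by ring]
    _ ≤ (k + 2).choose k * ((k + 3) / 3 : ℝ) ^ n * x ^ (n + 2) := by
        gcongr; exact Nat.cast_choose_add_two_le_mul_pow n k
    _ = (k + 2).choose k * x ^ 2 * r ^ n := by simp only [r, mul_pow]; ring

lemma norm_inv_one_sub_pow_twentyfour_sub_le (hq : ‖q‖ ≤ 0.005) :
    ‖((1 - q) ^ 24)⁻¹ - 1 - 24 * q‖ ≤ 313.6 * ‖q‖ ^ 2 := by
  have h := norm_inv_one_sub_pow_sub_le 23 (q := q) (by norm_num; linarith)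
  norm_num [show Nat.choose 25 23 = 300 by rfl] at h
  refine h.trans ?_
  rw [div_le_iff₀ (by linarith)]
  nlinarith [mul_nonneg (sq_nonneg ‖q‖) (by linarith : (0 : ℝ) ≤ 13.6 - 2718 * ‖q‖)]

lemma summable_log_one_sub_pow_succ (hq : ‖q‖ < 1) :
    Summable fun n : ℕ => log (1 - q ^ (n + 1)) := by
  have h : Summable fun n : ℕ => -q ^ (n + 1) :=
    ((summable_nat_add_iff (f := fun n => q ^ n) 1).2 (summable_geometric_of_norm_lt_one hq)).neg
  simpa only [← sub_eq_add_neg] using Complex.summable_log_one_add_of_summable h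

lemma hasProd_one_sub_pow_succ_pow (hq : ‖q‖ < 1) (k : ℕ) :
    HasProd (fun n : ℕ => (1 - q ^ (n + 1)) ^ k) (exp (k * ∑' n : ℕ, log (1 - q ^ (n + 1)))) := by
  have h := ((summable_log_one_sub_pow_succ hq).hasSum.mul_left (k : ℂ)).cexp
  have hterm : ∀ n : ℕ, exp (k * log (1 - q ^ (n + 1))) = (1 - q ^ (n + 1)) ^ k := fun n => by
    rw [exp_nat_mul, exp_log (one_sub_ne_zero_of_norm_lt_one (norm_pow_succ_lt_one hq n))]
  simpa only [Function.comp_def, hterm] using h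

lemma norm_tsum_log_one_sub_pow_add_two_le (hq : ‖q‖ < 1) :
    ‖∑' n : ℕ, log (1 - q ^ (n + 2))‖ ≤ ‖q‖ ^ 2 / (1 - ‖q‖) ^ 2 := by
  set x := ‖q‖
  have hx : 0 < 1 - x := by linarith
  have hgeom : HasSum (fun n : ℕ => x ^ 2 / (1 - x) * x ^ n) (x ^ 2 / (1 - x) ^ 2) := by
    rw [show x ^ 2 / (1 - x) ^ 2 = x ^ 2 / (1 - x) * (1 - x)⁻¹ by field_simp]
    exact (hasSum_geometric_of_lt_one (norm_nonneg q) hq).mul_left _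
  refine tsum_of_norm_bounded hgeom fun n => ?_
  have hxn : x ^ (n + 2) ≤ x := pow_le_of_le_one (norm_nonneg q) hq.le (by omega)
  calc ‖log (1 - q ^ (n + 2))‖ ≤ x ^ (n + 2) / (1 - x ^ (n + 2)) := by
        simpa only [norm_pow] using Complex.norm_log_one_sub_le (norm_pow_succ_lt_one hq (n + 1))
    _ ≤ x ^ (n + 2) / (1 - x) := by gcongr
    _ = x ^ 2 / (1 - x) * x ^ n := by ring

lemma norm_exp_neg_mul_tsum_log_sub_one_le (hq : ‖q‖ ≤ 0.005) :
    ‖exp (-(24 * ∑' n : ℕ, log (1 - q ^ (n + 2)))) - 1‖ ≤ 24.27 * ‖q‖ ^ 2 := by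
  set z := -(24 * ∑' n : ℕ, log (1 - q ^ (n + 2)))
  have hT := norm_tsum_log_one_sub_pow_add_two_le (q := q) (by linarith)
  have hdenom : ‖q‖ ^ 2 / (1 - ‖q‖) ^ 2 ≤ 1.0102 * ‖q‖ ^ 2 := by
    have h1 : 0.99 ≤ (1 - ‖q‖) ^ 2 := by nlinarith [norm_nonneg q]
    rw [div_le_iff₀ (by linarith)]
    nlinarith [mul_nonneg (sq_nonneg ‖q‖) (by linarith : (0 : ℝ) ≤ 1.0102 * (1 - ‖q‖) ^ 2 - 1)]
  have hz : ‖z‖ ≤ 24.25 * ‖q‖ ^ 2 := by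
    rw [norm_neg, norm_mul, Complex.norm_ofNat]
    linarith [sq_nonneg ‖q‖]
  have hq2 : ‖q‖ ^ 2 ≤ 0.000025 := by nlinarith [norm_nonneg q]
  have hz2 : ‖z‖ ^ 2 ≤ (24.25 * ‖q‖ ^ 2) ^ 2 := pow_le_pow_left₀ (norm_nonneg _) hz 2
  refine (Complex.norm_exp_sub_one_le_add_sq (by nlinarith)).trans ?_
  nlinarith

end qSeries

lemma mul_qPar_div_Δfun_eq {τ : ℂ} (hq : ‖qPar τ‖ < 1) :
    (2 * π * I) ^ 12 * qPar τ / Δfun τ =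
      ((1 - qPar τ) ^ 24)⁻¹ * exp (-(24 * ∑' n : ℕ, log (1 - qPar τ ^ (n + 2)))) := by
  set q := qPar τ
  have hc : (2 * π * I : ℂ) ^ 12 * q ≠ 0 :=
    mul_ne_zero (pow_ne_zero _ (by simp [Real.pi_ne_zero, I_ne_zero])) (exp_ne_zero _)
  have hfirst : exp (24 * log (1 - q)) = (1 - q) ^ 24 := by
    rw [show (24 : ℂ) = (24 : ℕ) by norm_num, exp_nat_mul,
      exp_log (one_sub_ne_zero_of_norm_lt_one hq)]
  rw [Δfun, (hasProd_one_sub_pow_succ_pow hq 24).tprod_eq, div_mul_cancel_left₀ hc,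
    (summable_log_one_sub_pow_succ hq).tsum_eq_zero_add, ← exp_neg, ← hfirst, ← exp_neg, ← exp_add]
  push_cast
  ring_nf

theorem abs_q_div_delta_estimate_general (τ : ℂ)
    (hq : ‖qPar τ‖ ≤ 0.005) :
    ‖(2 * Real.pi * Complex.I) ^ 12 * qPar τ / Δfun τ - 1 - 24 * qPar τ‖ ≤
      342 * ‖qPar τ‖ ^ 2 := by
  set q := qPar τ
  set E := exp (-(24 * ∑' n : ℕ, log (1 - q ^ (n + 2)))) - 1
  set A := ((1 - q) ^ 24)⁻¹ - 1 - 24 * q with hA_def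
  have hA : ‖A‖ ≤ 313.6 * ‖q‖ ^ 2 := norm_inv_one_sub_pow_twentyfour_sub_le hq
  have hE : ‖E‖ ≤ 24.27 * ‖q‖ ^ 2 := norm_exp_neg_mul_tsum_log_sub_one_le hq
  have hB : 1 + ‖24 * q‖ + ‖A‖ ≤ 1.128 := by
    rw [norm_mul, Complex.norm_ofNat]; nlinarith [norm_nonneg q]
  have hinv : ((1 - q) ^ 24)⁻¹ = 1 + 24 * q + A := by rw [hA_def]; ring
  rw [mul_qPar_div_Δfun_eq (by linarith), hinv, ← add_sub_cancel 1 (exp _)]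
  calc _ ≤ ‖A‖ + (1 + ‖24 * q‖ + ‖A‖) * ‖E‖ := norm_mul_one_add_sub_le _ _ _
    _ ≤ 342 * ‖q‖ ^ 2 := by nlinarith [mul_le_mul hB hE (norm_nonneg _) (by norm_num)]

/-- For `τ ∈ ℍ` with `|q_τ| ≤ 0.005` one has
`|(2πi)¹²·q_τ/Δ(τ) − 1 − 24·q_τ| ≤ 342·|q_τ|²`. -/
theorem abs_q_div_delta_estimate (τ : ℂ) (hτ : 0 < τ.im)
    (hq : ‖qPar τ‖ ≤ 0.005) :
    ‖(2 * Real.pi * Complex.I) ^ 12 * qPar τ / Δfun τ - 1 - 24 * qPar τ‖ ≤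
      342 * ‖qPar τ‖ ^ 2 :=
  abs_q_div_delta_estimate_general τ hq
end

section
/- For every τ in the upper half-plane ℍ with |q_τ| < 0.001 one has |j(τ) − q_τ^{−1}| ≤ 1100; if moreover |j(τ)| > 2500, then (1/2)·|j(τ)| ≤ |q_τ^{−1}| ≤ (3/2)·|j(τ)|. -/
open scoped Real

/-! With `q = q_τ`, `j = (1 + 240 S)³ / (q P)` where `S = Σ n³qⁿ/(1 - qⁿ)` and
`P = ∏ (1 - qⁿ)²⁴`, so `j - q⁻¹ = ((1 + 240 S)³ - P) / (q P)`, and it suffices to show that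
`(1 + 240 S)³` and `P` are both `1 + O(|q|)` with explicit constants. The series `S` is dominated
by the geometric series `|q| Σ (8|q|)ⁿ / (1 - |q|)`, and `P = exp (24 Σ log (1 - qⁿ))` with
`|log (1 - qⁿ)| ≤ 3/2 |q|ⁿ`. For `|q| < 0.001` this gives `|(1 + 240 S)³ - 1| ≤ 921 |q|` and
`|P - 1| ≤ 73 |q|`, hence `|j - q⁻¹| ≤ 994 |q| / (0.92 |q|) ≤ 1100`. The second claim then
follows from the triangle inequality. -/

noncomputable def lambertSigma3 (q : ℂ) : ℂ :=
  ∑' n : ℕ, ((n : ℂ) + 1) ^ 3 * q ^ (n + 1) / (1 - q ^ (n + 1))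

noncomputable def deltaProd (q : ℂ) : ℂ := ∏' n : ℕ, (1 - q ^ (n + 1)) ^ 24

lemma jfun_eq_div (τ : ℂ) :
    jfun τ = (1 + 240 * lambertSigma3 (qPar τ)) ^ 3 / (qPar τ * deltaProd (qPar τ)) := by
  have h2πi : 2 * (π : ℂ) * Complex.I ≠ 0 := by simp [Real.pi_ne_zero]
  rw [jfun, c₂fun, Δfun, lambertSigma3, deltaProd]
  field_simp

lemma qPar_ne_zero (τ : ℂ) : qPar τ ≠ 0 := Complex.exp_ne_zero _

lemma succ_pow_three_le_eight_pow (n : ℕ) : ((n : ℝ) + 1) ^ 3 ≤ 8 ^ n := by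
  induction n with
  | zero => norm_num
  | succ n ih =>
    push_cast
    calc ((n : ℝ) + 1 + 1) ^ 3 ≤ (2 * ((n : ℝ) + 1)) ^ 3 := by gcongr; linarith
      _ = 8 * ((n : ℝ) + 1) ^ 3 := by ring
      _ ≤ 8 ^ (n + 1) := by rw [pow_succ' (8 : ℝ) n]; linarith

lemma norm_pow_succ_le {q : ℂ} (hq : ‖q‖ ≤ 1) (n : ℕ) : ‖q ^ (n + 1)‖ ≤ ‖q‖ := by
  rw [norm_pow]
  exact pow_le_of_le_one (norm_nonneg q) hq n.succ_ne_zero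

lemma one_sub_norm_le_norm_one_sub_pow_succ {q : ℂ} (hq : ‖q‖ ≤ 1) (n : ℕ) :
    1 - ‖q‖ ≤ ‖1 - q ^ (n + 1)‖ := by
  linarith [norm_sub_norm_le (1 : ℂ) (q ^ (n + 1)), norm_one (α := ℂ), norm_pow_succ_le hq n]

lemma norm_lambertSigma3_term_le {q : ℂ} (hq : ‖q‖ < 1) (n : ℕ) :
    ‖((n : ℂ) + 1) ^ 3 * q ^ (n + 1) / (1 - q ^ (n + 1))‖ ≤ ‖q‖ / (1 - ‖q‖) * (8 * ‖q‖) ^ n := by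
  have hnum : ‖((n : ℂ) + 1) ^ 3 * q ^ (n + 1)‖ ≤ 8 ^ n * ‖q‖ ^ (n + 1) := by
    rw [norm_mul, norm_pow, norm_pow]
    norm_cast
    exact mul_le_mul_of_nonneg_right (by exact_mod_cast succ_pow_three_le_eight_pow n)
      (by positivity)
  calc ‖((n : ℂ) + 1) ^ 3 * q ^ (n + 1) / (1 - q ^ (n + 1))‖
      ≤ 8 ^ n * ‖q‖ ^ (n + 1) / (1 - ‖q‖) := by
        rw [norm_div]
        exact div_le_div₀ (by positivity) hnum (by linarith)
          (one_sub_norm_le_norm_one_sub_pow_succ hq.le n)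
    _ = ‖q‖ / (1 - ‖q‖) * (8 * ‖q‖) ^ n := by ring

lemma norm_lambertSigma3_le {q : ℂ} (hq : ‖q‖ < 1 / 8) :
    ‖lambertSigma3 q‖ ≤ ‖q‖ / ((1 - ‖q‖) * (1 - 8 * ‖q‖)) := by
  have hgeom : HasSum (fun n : ℕ ↦ ‖q‖ / (1 - ‖q‖) * (8 * ‖q‖) ^ n)
      (‖q‖ / (1 - ‖q‖) * (1 - 8 * ‖q‖)⁻¹) :=
    (hasSum_geometric_of_lt_one (by positivity) (by linarith)).mul_left _
  exact (tsum_of_norm_bounded hgeom (norm_lambertSigma3_term_le (by linarith))).trans_eq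
    (by field_simp)

lemma norm_log_one_sub_pow_succ_le {q : ℂ} (hq : ‖q‖ ≤ 1 / 2) (n : ℕ) :
    ‖Complex.log (1 - q ^ (n + 1))‖ ≤ 3 / 2 * ‖q‖ ^ (n + 1) := by
  have h : ‖-q ^ (n + 1)‖ ≤ 1 / 2 := by
    rw [norm_neg]; exact (norm_pow_succ_le (by linarith) n).trans hq
  simpa [sub_eq_add_neg] using Complex.norm_log_one_add_half_le_self h

lemma summable_log_deltaProd_and_norm_tsum_le {q : ℂ} (hq : ‖q‖ ≤ 1 / 2) :
    Summable (fun n : ℕ ↦ 24 * Complex.log (1 - q ^ (n + 1))) ∧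
      ‖∑' n : ℕ, 24 * Complex.log (1 - q ^ (n + 1))‖ ≤ 36 * ‖q‖ / (1 - ‖q‖) := by
  have hbound (n : ℕ) : ‖24 * Complex.log (1 - q ^ (n + 1))‖ ≤ 36 * ‖q‖ * ‖q‖ ^ n := by
    rw [norm_mul, Complex.norm_ofNat]
    linarith [norm_log_one_sub_pow_succ_le hq n, pow_succ' ‖q‖ n]
  have hgeom : HasSum (fun n : ℕ ↦ 36 * ‖q‖ * ‖q‖ ^ n) (36 * ‖q‖ * (1 - ‖q‖)⁻¹) :=
    (hasSum_geometric_of_lt_one (norm_nonneg q) (by linarith)).mul_left _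
  exact ⟨.of_norm_bounded hgeom.summable hbound, (tsum_of_norm_bounded hgeom hbound).trans_eq
    (by ring)⟩

lemma deltaProd_eq_exp_tsum {q : ℂ} (hq : ‖q‖ ≤ 1 / 2) :
    deltaProd q = Complex.exp (∑' n : ℕ, 24 * Complex.log (1 - q ^ (n + 1))) := by
  have hfactor (n : ℕ) :
      (1 - q ^ (n + 1)) ^ 24 = Complex.exp (24 * Complex.log (1 - q ^ (n + 1))) := by
    have hne : 1 - q ^ (n + 1) ≠ 0 := norm_pos_iff.mp <|
      lt_of_lt_of_le (by linarith) (one_sub_norm_le_norm_one_sub_pow_succ (by linarith) n)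
    rw [show (24 : ℂ) = ((24 : ℕ) : ℂ) by norm_num, Complex.exp_nat_mul, Complex.exp_log hne]
  simp_rw [deltaProd, hfactor]
  exact ((summable_log_deltaProd_and_norm_tsum_le hq).1.hasSum.cexp).tprod_eq

lemma norm_deltaProd_sub_one_le {q : ℂ} (hq : ‖q‖ ≤ 1 / 37) :
    ‖deltaProd q - 1‖ ≤ 72 * ‖q‖ / (1 - ‖q‖) := by
  have hL := (summable_log_deltaProd_and_norm_tsum_le (q := q) (by linarith)).2
  have hL1 : 36 * ‖q‖ / (1 - ‖q‖) ≤ 1 := by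
    rw [div_le_one (by linarith)]; linarith
  rw [deltaProd_eq_exp_tsum (by linarith)]
  calc _ ≤ 2 * ‖∑' n : ℕ, 24 * Complex.log (1 - q ^ (n + 1))‖ :=
        Complex.norm_exp_sub_one_le (hL.trans hL1)
    _ ≤ 2 * (36 * ‖q‖ / (1 - ‖q‖)) := by gcongr
    _ = 72 * ‖q‖ / (1 - ‖q‖) := by ring

lemma norm_one_add_pow_sub_one_le {R : Type*} [NormedRing R] [NormOneClass R] (u : R) (m : ℕ) :
    ‖(1 + u) ^ m - 1‖ ≤ (1 + ‖u‖) ^ m - 1 := by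
  induction m with
  | zero => simp
  | succ m ih =>
    have hrec : (1 + u) ^ (m + 1) - 1 = ((1 + u) ^ m - 1) * (1 + u) + u := by
      rw [pow_succ]; noncomm_ring
    have htri : ‖1 + u‖ ≤ 1 + ‖u‖ := (norm_add_le _ _).trans_eq (by rw [norm_one])
    have hone_le : 1 ≤ (1 + ‖u‖) ^ m := one_le_pow₀ (le_add_of_nonneg_right (norm_nonneg u))
    calc ‖(1 + u) ^ (m + 1) - 1‖ ≤ ‖(1 + u) ^ m - 1‖ * ‖1 + u‖ + ‖u‖ := by
          rw [hrec]; exact (norm_add_le _ _).trans (by gcongr; exact norm_mul_le _ _)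
      _ ≤ ((1 + ‖u‖) ^ m - 1) * (1 + ‖u‖) + ‖u‖ := by gcongr
      _ = (1 + ‖u‖) ^ (m + 1) - 1 := by ring

lemma norm_div_sub_inv_le {q : ℂ} (hq0 : q ≠ 0) (hq : ‖q‖ < 0.001) :
    ‖(1 + 240 * lambertSigma3 q) ^ 3 / (q * deltaProd q) - q⁻¹‖ ≤ 1100 := by
  have hx0 : 0 < ‖q‖ := norm_pos_iff.mpr hq0
  have hS : ‖240 * lambertSigma3 q‖ ≤ 243 * ‖q‖ :=
    calc ‖240 * lambertSigma3 q‖ = 240 * ‖lambertSigma3 q‖ := by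
          rw [norm_mul, Complex.norm_ofNat]
      _ ≤ 240 * (‖q‖ / ((1 - ‖q‖) * (1 - 8 * ‖q‖))) := by
          gcongr; exact norm_lambertSigma3_le (by linarith)
      _ ≤ 243 * ‖q‖ := by
          rw [← mul_div_assoc, div_le_iff₀ (by nlinarith)]
          nlinarith [mul_le_mul_of_nonneg_left hq.le (mul_pos hx0 hx0).le, mul_pos hx0 hx0]
  have hA : ‖(1 + 240 * lambertSigma3 q) ^ 3 - 1‖ ≤ 921 * ‖q‖ :=
    calc _ ≤ (1 + ‖240 * lambertSigma3 q‖) ^ 3 - 1 := norm_one_add_pow_sub_one_le _ 3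
      _ ≤ (1 + 243 * ‖q‖) ^ 3 - 1 := by gcongr
      _ = ‖q‖ * (729 + 177147 * ‖q‖ + 14348907 * ‖q‖ ^ 2) := by ring
      _ ≤ ‖q‖ * 921 := by gcongr; nlinarith
      _ = 921 * ‖q‖ := by ring
  have hP : ‖deltaProd q - 1‖ ≤ 73 * ‖q‖ :=
    calc _ ≤ 72 * ‖q‖ / (1 - ‖q‖) := norm_deltaProd_sub_one_le (by linarith)
      _ ≤ 73 * ‖q‖ := by rw [div_le_iff₀ (by linarith)]; nlinarith
  have hPnorm : 0.92 ≤ ‖deltaProd q‖ := by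
    linarith [norm_sub_norm_le (1 : ℂ) (deltaProd q), norm_sub_rev (1 : ℂ) (deltaProd q),
      norm_one (α := ℂ)]
  have hP0 : deltaProd q ≠ 0 := norm_pos_iff.mp (by linarith)
  have hid : (1 + 240 * lambertSigma3 q) ^ 3 / (q * deltaProd q) - q⁻¹ =
      (((1 + 240 * lambertSigma3 q) ^ 3 - 1) - (deltaProd q - 1)) / (q * deltaProd q) := by
    field_simp; ring
  rw [hid, norm_div, norm_mul, div_le_iff₀ (by positivity)]
  calc _ ≤ 921 * ‖q‖ + 73 * ‖q‖ := (norm_sub_le _ _).trans (add_le_add hA hP)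
    _ ≤ 1100 * (‖q‖ * 0.92) := by linarith
    _ ≤ 1100 * (‖q‖ * ‖deltaProd q‖) := by gcongr

theorem abs_j_sub_qinv_small_general (τ : ℂ) (hq : ‖qPar τ‖ < 0.001) :
    ‖jfun τ - (qPar τ)⁻¹‖ ≤ 1100 ∧
      (2500 < ‖jfun τ‖ →
        1 / 2 * ‖jfun τ‖ ≤ ‖(qPar τ)⁻¹‖ ∧
          ‖(qPar τ)⁻¹‖ ≤ 3 / 2 * ‖jfun τ‖) := by
  have hj : ‖jfun τ - (qPar τ)⁻¹‖ ≤ 1100 := by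
    rw [jfun_eq_div]
    exact norm_div_sub_inv_le (qPar_ne_zero τ) hq
  refine ⟨hj, fun hbig ↦ ⟨?_, ?_⟩⟩
  · linarith [norm_le_norm_add_norm_sub' (jfun τ) (qPar τ)⁻¹]
  · linarith [norm_le_norm_add_norm_sub (jfun τ) (qPar τ)⁻¹]

/-- For `τ ∈ ℍ` with `|q_τ| < 0.001` one has `|j(τ) − q_τ⁻¹| ≤ 1100`; if moreover
`|j(τ)| > 2500`, then `(1/2)·|j(τ)| ≤ |q_τ⁻¹| ≤ (3/2)·|j(τ)|`. -/
theorem abs_j_sub_qinv_small (τ : ℂ) (hτ : 0 < τ.im)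
    (hq : ‖qPar τ‖ < 0.001) :
    ‖jfun τ - (qPar τ)⁻¹‖ ≤ 1100 ∧
      (2500 < ‖jfun τ‖ →
        1 / 2 * ‖jfun τ‖ ≤ ‖(qPar τ)⁻¹‖ ∧
          ‖(qPar τ)⁻¹‖ ≤ 3 / 2 * ‖jfun τ‖) :=
  abs_j_sub_qinv_small_general τ hq
end

section
/- Let a = (a₁, a₂) ∈ ℚ² with a₁ ∈ ℤ and a₂ ∉ ℤ. Then for every τ in the upper half-plane ℍ with |q_τ| ≤ 0.1 one has | log|g_a(τ)| − ℓ_a·log|q_τ| − log|1 − e(a₂)| | ≤ 3·|q_τ|. -/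
open scoped Real

/-- `e(a) = e^{2πia}` for a rational number `a`. -/
noncomputable def eRat (a : ℚ) : ℂ := Complex.exp (2 * Real.pi * Complex.I * (a : ℂ))

/-- `q_τ^a = e^{2πiaτ}` for a rational number `a`. -/
noncomputable def qRatPow (τ : ℂ) (a : ℚ) : ℂ :=
  Complex.exp (2 * Real.pi * Complex.I * (a : ℂ) * τ)

/-- The second Bernoulli polynomial `B₂(T) = T² − T + 1/6`, evaluated on `ℚ`. -/
def B₂ (t : ℚ) : ℚ := t ^ 2 - t + 1 / 6

/-- `ℓ_a = B₂(a₁ − ⌊a₁⌋)/2` for `a = (a₁, a₂) ∈ ℚ²`. -/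
def ℓSiegel (a : ℚ × ℚ) : ℚ := B₂ (Int.fract a.1) / 2

/-- The Siegel function `g_a(τ)`, defined for `a = (a₁, a₂) ∈ ℚ²` with `a ∉ ℤ²` by the
convergent product
`g_a(τ) = −q_τ^{B₂(a₁)/2}·e(a₂(a₁−1)/2)·(1−q_z)·∏_{n≥1}(1−q_τⁿ q_z)(1−q_τⁿ/q_z)`,
where `q_z = q_τ^{a₁}·e(a₂)`. -/
noncomputable def gSiegel (a : ℚ × ℚ) (τ : ℂ) : ℂ :=
  -(qRatPow τ (B₂ a.1 / 2)) * eRat (a.2 * (a.1 - 1) / 2) *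
    (1 - qRatPow τ a.1 * eRat a.2) *
    ∏' n : ℕ, ((1 - qPar τ ^ (n + 1) * (qRatPow τ a.1 * eRat a.2)) *
      (1 - qPar τ ^ (n + 1) / (qRatPow τ a.1 * eRat a.2)))

/-! With `a₁ = m ∈ ℤ` and `ζ = e(a₂)`, the Siegel product is `q^{B₂(m)/2}` times a root of unity
times `θ(q^m ζ)`, where `θ(w) = (1 - w) ∏_{n ≥ 1} (1 - qⁿ w)(1 - qⁿ / w)`. Taking `log ‖·‖` turns
the product into an absolutely convergent series, and reindexing it gives the quasi-periodicity
`log ‖θ(q w)‖ = log ‖θ(w)‖ - log ‖w‖`, hence `log ‖θ(q^m ζ)‖ = log ‖θ(ζ)‖ - m(m-1)/2 · log ‖q‖`.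
Since `B₂(m)/2 - m(m-1)/2 = 1/12 = ℓ_a`, what is left is
`∑_{n ≥ 1} (log ‖1 - qⁿ ζ‖ + log ‖1 - qⁿ ζ⁻¹‖)`, whose terms are bounded by `2 ‖q‖ⁿ / (1 - ‖q‖)`;
the total `2 ‖q‖ / (1 - ‖q‖)² ≤ 3 ‖q‖` for `‖q‖ ≤ 1/10`. -/

lemma norm_tprod_one_add_eq_exp_tsum {ι R : Type*} [NormedCommRing R] [NormOneClass R]
    [NormMulClass R] [CompleteSpace R] {f : ι → R} (hf : Summable (‖f ·‖))
    (h : ∀ i, 1 + f i ≠ 0) :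
    ‖∏' i, (1 + f i)‖ = Real.exp (∑' i, Real.log ‖1 + f i‖) := by
  rw [(multipliable_one_add_of_summable hf).norm_tprod,
    Real.rexp_tsum_eq_tprod (fun i ↦ norm_pos_iff.mpr (h i)) hf.summable_log_norm_one_add]

lemma abs_log_norm_one_sub_le {R : Type*} [SeminormedRing R] [NormOneClass R] {z : R}
    (hz : ‖z‖ < 1) : |Real.log ‖1 - z‖| ≤ ‖z‖ / (1 - ‖z‖) := by
  have h_lower : 1 - ‖z‖ ≤ ‖1 - z‖ := by simpa using norm_sub_norm_le (1 : R) z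
  have h_upper : ‖1 - z‖ ≤ 1 + ‖z‖ := by simpa using norm_sub_le (1 : R) z
  have hpos : 0 < 1 - ‖z‖ := sub_pos.mpr hz
  have hx : 0 < ‖1 - z‖ := hpos.trans_le h_lower
  rw [abs_le]
  constructor
  · calc -(‖z‖ / (1 - ‖z‖)) = 1 - (1 - ‖z‖)⁻¹ := by field_simp; ring
      _ ≤ 1 - ‖1 - z‖⁻¹ := by gcongr
      _ ≤ Real.log ‖1 - z‖ := Real.one_sub_inv_le_log_of_pos hx
  · calc Real.log ‖1 - z‖ ≤ ‖1 - z‖ - 1 := Real.log_le_sub_one_of_pos hx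
      _ ≤ ‖z‖ := by linarith
      _ ≤ ‖z‖ / (1 - ‖z‖) := le_div_self (norm_nonneg z) hpos (by linarith [norm_nonneg z])

lemma log_norm_one_sub_inv {K : Type*} [NormedField K] {c : K} (hc : c ≠ 0) :
    Real.log ‖1 - c⁻¹‖ = Real.log ‖1 - c‖ - Real.log ‖c‖ := by
  rcases eq_or_ne c 1 with rfl | hc1
  · simp
  rw [show 1 - c⁻¹ = -(1 - c) / c by field_simp; ring, norm_div, norm_neg,
    Real.log_div (norm_ne_zero_iff.mpr (sub_ne_zero.mpr hc1.symm)) (norm_ne_zero_iff.mpr hc)]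

lemma zpow_mul_ne_one {K : Type*} [NormedDivisionRing K] {q ζ : K} (hq : ‖q‖ < 1) (hζ : ‖ζ‖ = 1)
    (hζ1 : ζ ≠ 1) (k : ℤ) : q ^ k * ζ ≠ 1 := by
  intro h
  have hk : ‖q‖ ^ k = 1 := by simpa [hζ] using congrArg norm h
  rw [zpow_eq_one_iff_right₀ (norm_nonneg q) hq.ne] at hk
  simp [hk, hζ1] at h

section Theta

variable {q : ℂ}

lemma summable_norm_pow_succ_mul (hq : ‖q‖ < 1) (c : ℂ) :
    Summable fun n : ℕ ↦ ‖q ^ (n + 1) * c‖ := by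
  simpa [pow_succ, mul_assoc] using
    (summable_norm_geometric_of_norm_lt_one hq).mul_right (‖q‖ * ‖c‖)

lemma summable_log_norm_one_sub_pow_succ_mul (hq : ‖q‖ < 1) (c : ℂ) :
    Summable fun n : ℕ ↦ Real.log ‖1 - q ^ (n + 1) * c‖ := by
  simpa [sub_eq_add_neg] using
    Summable.summable_log_norm_one_add (f := fun n : ℕ ↦ -(q ^ (n + 1) * c))
      (by simpa using summable_norm_pow_succ_mul hq c)

noncomputable def logNormProd (q c : ℂ) : ℝ := ∑' n : ℕ, Real.log ‖1 - q ^ (n + 1) * c‖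

noncomputable def thetaProd (q w : ℂ) : ℂ :=
  (1 - w) * ∏' n : ℕ, ((1 - q ^ (n + 1) * w) * (1 - q ^ (n + 1) / w))

/-- `log ‖thetaProd q w‖` whenever `w ∉ q ^ ℤ` (`norm_thetaProd`); thanks to `Real.log 0 = 0`
it obeys the quasi-periodicity `logNormTheta_self_mul` for every `w ≠ 0`. -/
noncomputable def logNormTheta (q w : ℂ) : ℝ :=
  Real.log ‖1 - w‖ + logNormProd q w + logNormProd q w⁻¹

lemma multipliable_one_sub_pow_succ_mul (hq : ‖q‖ < 1) (c : ℂ) :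
    Multipliable fun n : ℕ ↦ 1 - q ^ (n + 1) * c := by
  simpa [sub_eq_add_neg] using Complex.multipliable_one_add_of_summable
    (f := fun n : ℕ ↦ -(q ^ (n + 1) * c)) (summable_norm_pow_succ_mul hq c).of_norm.neg

lemma norm_tprod_one_sub_pow_succ_mul (hq : ‖q‖ < 1) {c : ℂ}
    (hc : ∀ n : ℕ, 1 - q ^ (n + 1) * c ≠ 0) :
    ‖∏' n : ℕ, (1 - q ^ (n + 1) * c)‖ = Real.exp (logNormProd q c) := by
  simpa [sub_eq_add_neg, logNormProd] using
    norm_tprod_one_add_eq_exp_tsum (f := fun n : ℕ ↦ -(q ^ (n + 1) * c))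
      (by simpa using summable_norm_pow_succ_mul hq c) (by simpa [← sub_eq_add_neg] using hc)

lemma norm_thetaProd (hq : ‖q‖ < 1) {w : ℂ} (hw : ∀ k : ℤ, q ^ k * w ≠ 1) :
    ‖thetaProd q w‖ = Real.exp (logNormTheta q w) := by
  have h_one : 1 - w ≠ 0 := sub_ne_zero.mpr (by simpa [eq_comm] using hw 0)
  have h_pos (n : ℕ) : 1 - q ^ (n + 1) * w ≠ 0 := by
    have := hw (n + 1 : ℕ)
    rw [zpow_natCast] at this
    exact sub_ne_zero.mpr this.symm
  have h_neg (n : ℕ) : 1 - q ^ (n + 1) * w⁻¹ ≠ 0 := by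
    intro h
    have hw0 : w ≠ 0 := by rintro rfl; simp at h
    rw [sub_eq_zero, eq_comm, mul_inv_eq_one₀ hw0] at h
    apply hw (-(n + 1 : ℕ))
    rw [zpow_neg, zpow_natCast, h, inv_mul_cancel₀ hw0]
  simp_rw [thetaProd, div_eq_mul_inv]
  rw [(multipliable_one_sub_pow_succ_mul hq w).tprod_mul
      (multipliable_one_sub_pow_succ_mul hq w⁻¹), norm_mul, norm_mul,
    norm_tprod_one_sub_pow_succ_mul hq h_pos, norm_tprod_one_sub_pow_succ_mul hq h_neg,
    logNormTheta, Real.exp_add, Real.exp_add, Real.exp_log (norm_pos_iff.mpr h_one), mul_assoc]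

lemma logNormProd_eq_add_self_mul (hq : ‖q‖ < 1) (c : ℂ) :
    logNormProd q c = Real.log ‖1 - q * c‖ + logNormProd q (q * c) := by
  rw [logNormProd, (summable_log_norm_one_sub_pow_succ_mul hq c).tsum_eq_zero_add, logNormProd]
  congr 1
  · simp
  · exact tsum_congr fun n ↦ by rw [pow_succ q (n + 1), mul_assoc]

lemma logNormProd_inv_self_mul (hq0 : q ≠ 0) (hq : ‖q‖ < 1) (c : ℂ) :
    logNormProd q (q * c)⁻¹ = Real.log ‖1 - c⁻¹‖ + logNormProd q c⁻¹ := by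
  have h_shift (n : ℕ) : q ^ (n + 1) * (q * c)⁻¹ = q ^ n * c⁻¹ := by
    rw [mul_inv, pow_succ, mul_assoc, mul_inv_cancel_left₀ hq0]
  have h_summable : Summable fun n : ℕ ↦ Real.log ‖1 - q ^ n * c⁻¹‖ :=
    (summable_nat_add_iff 1).mp (summable_log_norm_one_sub_pow_succ_mul hq c⁻¹)
  simp only [logNormProd, h_shift, h_summable.tsum_eq_zero_add, pow_zero, one_mul]

lemma logNormTheta_self_mul (hq0 : q ≠ 0) (hq : ‖q‖ < 1) {c : ℂ} (hc : c ≠ 0) :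
    logNormTheta q (q * c) = logNormTheta q c - Real.log ‖c‖ := by
  rw [logNormTheta, logNormTheta, logNormProd_inv_self_mul hq0 hq, log_norm_one_sub_inv hc,
    logNormProd_eq_add_self_mul hq c]
  ring

lemma logNormTheta_zpow_mul (hq0 : q ≠ 0) (hq : ‖q‖ < 1) {c : ℂ} (hc : c ≠ 0) (m : ℤ) :
    logNormTheta q (q ^ m * c) =
      logNormTheta q c - m * Real.log ‖c‖ - m * (m - 1) / 2 * Real.log ‖q‖ := by
  have h_step (k : ℤ) : logNormTheta q (q ^ (k + 1) * c) =
      logNormTheta q (q ^ k * c) - (Real.log ‖c‖ + k * Real.log ‖q‖) := by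
    rw [zpow_add_one₀ hq0, mul_comm _ q, mul_assoc,
      logNormTheta_self_mul hq0 hq (mul_ne_zero (zpow_ne_zero k hq0) hc), norm_mul, norm_zpow,
      Real.log_mul (zpow_ne_zero k (norm_ne_zero_iff.mpr hq0)) (norm_ne_zero_iff.mpr hc),
      Real.log_zpow, add_comm]
  induction m using Int.induction_on with
  | zero => simp
  | succ k ih => rw [h_step, ih]; push_cast; ring
  | pred k ih =>
    have h := h_step (-k - 1)
    rw [sub_add_cancel, ih] at h
    push_cast at h ⊢
    linear_combination -h

lemma abs_logNormProd_le {c : ℂ} (hq : ‖q‖ < 1) (hc : ‖c‖ ≤ 1) :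
    |logNormProd q c| ≤ ‖q‖ / (1 - ‖q‖) ^ 2 := by
  have hr : 0 < 1 - ‖q‖ := sub_pos.mpr hq
  have h_geom : HasSum (fun n : ℕ ↦ ‖q‖ ^ (n + 1) / (1 - ‖q‖)) (‖q‖ / (1 - ‖q‖) ^ 2) := by
    have h := (hasSum_geometric_of_lt_one (norm_nonneg q) hq).mul_left (‖q‖ / (1 - ‖q‖))
    rw [← div_eq_mul_inv, div_div, ← sq] at h
    exact h.congr_fun fun n ↦ by ring
  have h_term (n : ℕ) : ‖Real.log ‖1 - q ^ (n + 1) * c‖‖ ≤ ‖q‖ ^ (n + 1) / (1 - ‖q‖) := by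
    have hz : ‖q ^ (n + 1) * c‖ ≤ ‖q‖ ^ (n + 1) := by
      rw [norm_mul, norm_pow]
      exact mul_le_of_le_one_right (by positivity) hc
    have hzq : ‖q ^ (n + 1) * c‖ ≤ ‖q‖ :=
      hz.trans (pow_le_of_le_one (norm_nonneg q) hq.le n.succ_ne_zero)
    calc ‖Real.log ‖1 - q ^ (n + 1) * c‖‖
        ≤ ‖q ^ (n + 1) * c‖ / (1 - ‖q ^ (n + 1) * c‖) :=
          abs_log_norm_one_sub_le (hzq.trans_lt hq)
      _ ≤ ‖q‖ ^ (n + 1) / (1 - ‖q‖) := by gcongr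
  exact tsum_of_norm_bounded h_geom h_term

lemma abs_logNormTheta_sub_log_le {ζ : ℂ} (hq : ‖q‖ ≤ 1 / 10) (hζ : ‖ζ‖ = 1) :
    |logNormTheta q ζ - Real.log ‖1 - ζ‖| ≤ 3 * ‖q‖ := by
  have h_half (c : ℂ) (hc : ‖c‖ ≤ 1) : |logNormProd q c| ≤ 3 / 2 * ‖q‖ := by
    refine (abs_logNormProd_le (hq.trans_lt (by norm_num)) hc).trans ?_
    have h_sq : 2 / 3 ≤ (1 - ‖q‖) ^ 2 := by nlinarith [norm_nonneg q]
    rw [div_le_iff₀ (by positivity)]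
    nlinarith [norm_nonneg q]
  calc |logNormTheta q ζ - Real.log ‖1 - ζ‖| = |logNormProd q ζ + logNormProd q ζ⁻¹| := by
        rw [logNormTheta, add_assoc, add_sub_cancel_left]
    _ ≤ |logNormProd q ζ| + |logNormProd q ζ⁻¹| := abs_add_le _ _
    _ ≤ 3 / 2 * ‖q‖ + 3 / 2 * ‖q‖ :=
      add_le_add (h_half ζ hζ.le) (h_half ζ⁻¹ (by rw [norm_inv, hζ, inv_one]))
    _ = 3 * ‖q‖ := by ring

end Theta

lemma norm_eRat (x : ℚ) : ‖eRat x‖ = 1 := by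
  rw [eRat, show 2 * π * Complex.I * (x : ℂ) = ((2 * π * x : ℝ) : ℂ) * Complex.I by push_cast; ring,
    Complex.norm_exp_ofReal_mul_I]

lemma eRat_ne_one {x : ℚ} (hx : ¬ ∃ m : ℤ, x = m) : eRat x ≠ 1 := by
  rw [eRat, Ne, Complex.exp_eq_one_iff]
  rintro ⟨m, hm⟩
  rw [mul_comm] at hm
  exact hx ⟨m, by exact_mod_cast mul_right_cancel₀ Complex.two_pi_I_ne_zero hm⟩

lemma qRatPow_intCast (τ : ℂ) (m : ℤ) : qRatPow τ m = qPar τ ^ m := by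
  rw [qRatPow, qPar, ← Complex.exp_int_mul]
  push_cast
  ring_nf

lemma log_norm_qRatPow (τ : ℂ) (c : ℚ) :
    Real.log ‖qRatPow τ c‖ = c * Real.log ‖qPar τ‖ := by
  rw [qRatPow, qPar, Complex.norm_exp, Complex.norm_exp, Real.log_exp, Real.log_exp,
    show 2 * π * Complex.I * (c : ℂ) * τ = ((c : ℝ) : ℂ) * (2 * π * Complex.I * τ) by
      push_cast; ring, Complex.re_ofReal_mul]

lemma log_norm_gSiegel (a : ℚ × ℚ) {τ : ℂ} (hq : ‖qPar τ‖ < 1)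
    (hw : ∀ k : ℤ, qPar τ ^ k * (qRatPow τ a.1 * eRat a.2) ≠ 1) :
    Real.log ‖gSiegel a τ‖ =
      (B₂ a.1 / 2 : ℚ) * Real.log ‖qPar τ‖ + logNormTheta (qPar τ) (qRatPow τ a.1 * eRat a.2) := by
  have h_theta : gSiegel a τ = -(qRatPow τ (B₂ a.1 / 2)) * eRat (a.2 * (a.1 - 1) / 2) *
      thetaProd (qPar τ) (qRatPow τ a.1 * eRat a.2) := by
    rw [gSiegel, thetaProd, mul_assoc _ (1 - _)]
  have h_ne : ‖qRatPow τ (B₂ a.1 / 2)‖ ≠ 0 := norm_ne_zero_iff.mpr (Complex.exp_ne_zero _)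
  rw [h_theta, norm_mul, norm_mul, norm_neg, norm_eRat, mul_one, norm_thetaProd hq hw,
    Real.log_mul h_ne (Real.exp_pos _).ne', Real.log_exp, log_norm_qRatPow]

theorem siegel_log_estimate_of_int_general (a : ℚ × ℚ) (ha1 : ∃ m : ℤ, a.1 = (m : ℚ))
    (ha2 : ¬ ∃ m : ℤ, a.2 = (m : ℚ))
    (τ : ℂ) (hq : ‖qPar τ‖ ≤ 0.1) :
    |Real.log ‖gSiegel a τ‖ -
        (ℓSiegel a : ℝ) * Real.log ‖qPar τ‖ -
        Real.log ‖1 - eRat a.2‖| ≤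
      3 * ‖qPar τ‖ := by
  obtain ⟨m, hm⟩ := ha1
  have hq0 : qPar τ ≠ 0 := Complex.exp_ne_zero _
  have hq1 : ‖qPar τ‖ < 1 := hq.trans_lt (by norm_num)
  have hζ : ‖eRat a.2‖ = 1 := norm_eRat a.2
  have hζ0 : eRat a.2 ≠ 0 := Complex.exp_ne_zero _
  have hw : qRatPow τ a.1 * eRat a.2 = qPar τ ^ m * eRat a.2 := by rw [hm, qRatPow_intCast]
  have h_notMem (k : ℤ) : qPar τ ^ k * (qRatPow τ a.1 * eRat a.2) ≠ 1 := by
    rw [hw, ← mul_assoc, ← zpow_add₀ hq0]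
    exact zpow_mul_ne_one hq1 hζ (eRat_ne_one ha2) _
  have h_log : Real.log ‖gSiegel a τ‖ - (ℓSiegel a : ℝ) * Real.log ‖qPar τ‖ =
      logNormTheta (qPar τ) (eRat a.2) := by
    rw [log_norm_gSiegel a hq1 h_notMem, hw, logNormTheta_zpow_mul hq0 hq1 hζ0,
      hζ, Real.log_one, ℓSiegel, hm, Int.fract_intCast, B₂, B₂]
    push_cast
    ring
  rw [h_log]
  exact abs_logNormTheta_sub_log_le (hq.trans_eq (by norm_num)) hζ

/-- Let `a = (a₁,a₂) ∈ ℚ²` with `a₁ ∈ ℤ` and `a₂ ∉ ℤ`. Then for every `τ ∈ ℍ` with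
`|q_τ| ≤ 0.1` one has `| log|g_a(τ)| − ℓ_a·log|q_τ| − log|1 − e(a₂)| | ≤ 3·|q_τ|`. -/
theorem siegel_log_estimate_of_int (a : ℚ × ℚ) (ha1 : ∃ m : ℤ, a.1 = (m : ℚ))
    (ha2 : ¬ ∃ m : ℤ, a.2 = (m : ℚ))
    (τ : ℂ) (hτ : 0 < τ.im) (hq : ‖qPar τ‖ ≤ 0.1) :
    |Real.log ‖gSiegel a τ‖ -
        (ℓSiegel a : ℝ) * Real.log ‖qPar τ‖ -
        Real.log ‖1 - eRat a.2‖| ≤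
      3 * ‖qPar τ‖ :=
  siegel_log_estimate_of_int_general a ha1 ha2 τ hq
end
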